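/- For every E = ρ² ∈ ℂ with ρ = σ + iτ and |ρ| > max{1, 2A}, the discriminant satisfies |C(1,E) + S′(1,E) − 2cos ρ − (sin ρ/ρ)·∫₀¹V0(t)dt| ≤ 4A²e^{|τ|}/|ρ|²; that is, D(E) = 2cos ρ + (sin ρ/ρ)·∫₀¹V0(t)dt + f(ρ) with |f(ρ)| ≤ 4A²e^{|τ|}/|ρ|². -/

import Mathlib

open MeasureTheory Real Set

noncomputable section

/-- `u` is a solution of `-u'' + V0·u = E·u` in Carathéodory (integral) form,
with first derivative `u'`. -/
def IsSolution (V0 : ℝ → ℝ) (E : ℝ) (u u' : ℝ → ℝ) : Prop :=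
  (∀ x, HasDerivAt u (u' x) x) ∧
  (∀ x, u' x = u' 0 + ∫ t in (0:ℝ)..x, (V0 t - E) * u t)

/-- The cosine-type solution `C(·,E)`: `C(0,E)=1`, `C'(0,E)=0`. -/
def IsCosSolution (V0 : ℝ → ℝ) (E : ℝ) (c c' : ℝ → ℝ) : Prop :=
  IsSolution V0 E c c' ∧ c 0 = 1 ∧ c' 0 = 0

/-- The sine-type solution `S(·,E)`: `S(0,E)=0`, `S'(0,E)=1`. -/
def IsSinSolution (V0 : ℝ → ℝ) (E : ℝ) (s s' : ℝ → ℝ) : Prop :=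
  IsSolution V0 E s s' ∧ s 0 = 0 ∧ s' 0 = 1

/-- `E` satisfies the quasiperiodic eigenvalue equation `D(E) = 2 cos k`,
where `D(E) = C(1,E) + S'(1,E)` is the discriminant. -/
def IsQPEigen (V0 : ℝ → ℝ) (k E : ℝ) : Prop :=
  ∃ c c' s s' : ℝ → ℝ, IsCosSolution V0 E c c' ∧ IsSinSolution V0 E s s' ∧
    c 1 + s' 1 = 2 * Real.cos k

/-- `E = E^k_n` : the `n`-th smallest real solution of `D(E) = 2 cos k`
(there are exactly `n-1` solutions strictly below `E`). -/
def IsNthQPEigen (V0 : ℝ → ℝ) (k : ℝ) (n : ℕ) (E : ℝ) : Prop :=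
  IsQPEigen V0 k E ∧ {E' : ℝ | E' < E ∧ IsQPEigen V0 k E'}.ncard = n - 1

/-- `δ_n(k) = A e³ / (n sin k · sin(99k/100) · sin((π+99k)/100))`. -/
def deltaN (A : ℝ) (n : ℕ) (k : ℝ) : ℝ :=
  A * Real.exp 3 /
    ((n : ℝ) * (Real.sin k * Real.sin (99 * k / 100) * Real.sin ((π + 99 * k) / 100)))

/-- `a^k_n = nπ - k` for even `n`, `(n-1)π + k` for odd `n`. -/
def aNK (n : ℕ) (k : ℝ) : ℝ :=
  if Even n then (n : ℝ) * π - k else ((n : ℝ) - 1) * π + k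

/-- The threshold `1 + A/((k(π-k)/10⁴)·sin k·sin(99k/100)·sin((π+99k)/100))`. -/
def nthresh (A k : ℝ) : ℝ :=
  1 + A / ((k * (π - k) / 10 ^ 4) * Real.sin k * Real.sin (99 * k / 100) *
    Real.sin ((π + 99 * k) / 100))

/-- `L(k) = 1 + A/((k(π-k)/10⁴)·sin³k·sin(99k/100)·sin((π+99k)/100))`. -/
def bigL (A k : ℝ) : ℝ :=
  1 + A / ((k * (π - k) / 10 ^ 4) * Real.sin k ^ 3 * Real.sin (99 * k / 100) *
    Real.sin ((π + 99 * k) / 100))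

/-- `δ(k) = 40πAe³/(sin³k·sin(99k/100)·sin((π+99k)/100))`. -/
def smallDelta (A k : ℝ) : ℝ :=
  40 * π * A * Real.exp 3 /
    (Real.sin k ^ 3 * Real.sin (99 * k / 100) * Real.sin ((π + 99 * k) / 100))

/-- The normalized Floquet solution `φ(x,E) = C(x,E) + ((e^{ik} - C(1,E))/S(1,E))·S(x,E)`. -/
def floquetSol (k : ℝ) (c s : ℝ → ℝ) : ℝ → ℂ := fun x =>
  (c x : ℂ) + ((Complex.exp (Complex.I * (k : ℂ)) - (c 1 : ℂ)) / (s 1 : ℂ)) * (s x : ℂ)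

/-- `η'(x,E) = ω^k_n/(2|φ(x,E)|²) = sin k/(S(1,E)·|φ(x,E)|²)`. -/
def etaDeriv (k : ℝ) (c s : ℝ → ℝ) : ℝ → ℝ := fun x =>
  Real.sin k / (s 1 * ‖floquetSol k c s x‖ ^ 2)

/-- A Prüfer angle for the perturbation `V`: a locally absolutely continuous function
satisfying `θ' = η' - (V/η')·sin²θ` a.e. on `(0,∞)` (in integral form). -/
def IsPrueferAngle (eta V θ : ℝ → ℝ) : Prop :=
  (∀ a b : ℝ, 0 < a → a ≤ b →
      θ b - θ a = ∫ t in a..b, (eta t - V t / eta t * Real.sin (θ t) ^ 2)) ∧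
  (∀ a b : ℝ, 0 < a →
      IntervalIntegrable (fun t => eta t - V t / eta t * Real.sin (θ t) ^ 2) volume a b)

/-- `s(α,β,C) = (100·C·α^{β-1} + 10⁴)^{1/β}·α⁻¹`. -/
def sConst (α β C : ℝ) : ℝ := (100 * C * α ^ (β - 1) + 10 ^ 4) ^ (1 / β) / α

/-- `r(α,β,C) = 30·C·β⁻¹·α^{β-1} + 10π`. -/
def rConst (α β C : ℝ) : ℝ := 30 * C / β * α ^ (β - 1) + 10 * π

/-- `r(α) = s(α,2/3,1) + 4·r(α,2/3,1)·(α^{-4/3} + 3)^{1/2}`. -/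
def rA (α : ℝ) : ℝ :=
  sConst α (2 / 3) 1 + 4 * rConst α (2 / 3) 1 * Real.sqrt (α ^ (-(4 : ℝ) / 3) + 3)

/-!
With `E = ρ²`, pairing the equation with `φ(x - t)` for `φ = cos ρ·` and `φ = sin ρ· / ρ`
(integration by parts on one side, Fubini on the other) gives the variation-of-constants formulas
`u(x) = u(0) cos ρx + u'(0) sin ρx / ρ + ρ⁻¹ ∫₀ˣ sin ρ(x - t) V(t) u(t) dt` and
`u'(x) = -ρ u(0) sin ρx + u'(0) cos ρx + ∫₀ˣ cos ρ(x - t) V(t) u(t) dt`.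
As `|sin ρy|, |cos ρy| ≤ e^{|τ|y}` for `y ≥ 0` and `∫₀¹ |V| ≤ |ρ|/2`, maximising `e^{-|τ|x} |u(x)|`
over `[0, 1]` gives `|u(x)| ≤ 2 (|u(0)| + |u'(0)|/|ρ|) e^{|τ|x}`, so `C` and `S` differ from
`cos ρx` and `sin ρx / ρ` by at most `2A e^{|τ|x}/|ρ|` and `2A e^{|τ|x}/|ρ|²`. Substituting the free parts once
more into `C(1)` and `S'(1)` produces `2 cos ρ + (sin ρ/ρ) ∫₀¹ V` by the addition formula for `sin`,
and each of the two remaining integrals is at most `2A² e^{|τ|}/|ρ|²`.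
-/

theorem Complex.norm_exp_mul_I_le (z : ℂ) : ‖Complex.exp (z * Complex.I)‖ ≤ Real.exp |z.im| := by
  rw [Complex.norm_exp]
  exact Real.exp_le_exp.2 (by simpa using neg_le_abs z.im)

theorem Complex.norm_exp_neg_mul_I_le (z : ℂ) :
    ‖Complex.exp (-z * Complex.I)‖ ≤ Real.exp |z.im| := by
  rw [Complex.norm_exp]
  exact Real.exp_le_exp.2 (by simpa using le_abs_self z.im)

theorem Complex.norm_cos_le_exp_abs_im (z : ℂ) : ‖Complex.cos z‖ ≤ Real.exp |z.im| := by
  rw [Complex.cos, norm_div, Complex.norm_two]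
  linarith [norm_add_le (Complex.exp (z * Complex.I)) (Complex.exp (-z * Complex.I)),
    z.norm_exp_mul_I_le, z.norm_exp_neg_mul_I_le]

theorem Complex.norm_sin_le_exp_abs_im (z : ℂ) : ‖Complex.sin z‖ ≤ Real.exp |z.im| := by
  rw [Complex.sin, norm_div, norm_mul, Complex.norm_I, mul_one, Complex.norm_two]
  linarith [norm_sub_le (Complex.exp (-z * Complex.I)) (Complex.exp (z * Complex.I)),
    z.norm_exp_mul_I_le, z.norm_exp_neg_mul_I_le]

theorem Complex.abs_im_mul_ofReal_of_nonneg (ρ : ℂ) {y : ℝ} (hy : 0 ≤ y) :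
    |(ρ * y).im| = |ρ.im| * y := by
  rw [Complex.mul_im, Complex.ofReal_im, Complex.ofReal_re, mul_zero, zero_add, abs_mul,
    abs_of_nonneg hy]

theorem Complex.norm_cos_mul_ofReal_le (ρ : ℂ) {y : ℝ} (hy : 0 ≤ y) :
    ‖Complex.cos (ρ * y)‖ ≤ Real.exp (|ρ.im| * y) :=
  (ρ.abs_im_mul_ofReal_of_nonneg hy) ▸ Complex.norm_cos_le_exp_abs_im _

theorem Complex.norm_sin_mul_ofReal_le (ρ : ℂ) {y : ℝ} (hy : 0 ≤ y) :
    ‖Complex.sin (ρ * y)‖ ≤ Real.exp (|ρ.im| * y) :=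
  (ρ.abs_im_mul_ofReal_of_nonneg hy) ▸ Complex.norm_sin_le_exp_abs_im _

theorem IntervalIntegrable.of_sq {V : ℝ → ℝ} {a b : ℝ} (hm : AEStronglyMeasurable V)
    (h : IntervalIntegrable (fun x => V x ^ 2) volume a b) : IntervalIntegrable V volume a b := by
  refine IntervalIntegrable.mono_fun (f := fun x => (V x ^ 2 + 1) / 2)
    ((h.add intervalIntegrable_const).div_const 2) hm.restrict (ae_of_all _ fun x => ?_)
  dsimp only
  rw [Real.norm_eq_abs, Real.norm_of_nonneg (by positivity)]
  nlinarith [sq_nonneg (|V x| - 1), sq_abs (V x)]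

theorem IntervalIntegrable.ofReal_mul {V : ℝ → ℝ} {f : ℝ → ℂ} {a b : ℝ}
    (hV : IntervalIntegrable V volume a b) (hf : Continuous f) :
    IntervalIntegrable (fun t => (V t : ℂ) * f t) volume a b :=
  IntervalIntegrable.mul_continuousOn (f := fun t => (V t : ℂ)) ⟨hV.1.ofReal, hV.2.ofReal⟩
    hf.continuousOn

theorem IntervalIntegrable.mul_ofReal_mul {V : ℝ → ℝ} {k f : ℝ → ℂ} {a b : ℝ}
    (hV : IntervalIntegrable V volume a b) (hk : Continuous k) (hf : Continuous f) :
    IntervalIntegrable (fun t => k t * (V t * f t)) volume a b :=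
  (hV.ofReal_mul hf).continuousOn_mul hk.continuousOn

/-- Fubini on the triangle `a < σ ≤ t ≤ x`. -/
theorem integral_mul_integral_eq_integral_integral_mul {g h : ℝ → ℂ} {a x : ℝ} (hax : a ≤ x)
    (hg : IntervalIntegrable g volume a x) (hh : IntervalIntegrable h volume a x) :
    ∫ t in a..x, h t * ∫ σ in a..t, g σ = ∫ σ in a..x, (∫ t in σ..x, h t) * g σ := by
  set μ := volume.restrict (Ioc a x) with hμ
  let F : ℝ → ℝ → ℂ := fun t σ => if σ ≤ t then h t * g σ else 0
  have hF : Integrable (Function.uncurry F) (μ.prod μ) := by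
    refine ((hh.1.mul_prod hg.1).indicator (measurableSet_le measurable_snd measurable_fst)).congr
      (ae_of_all _ fun p => ?_)
    simp only [indicator_apply, mem_ofPred_eq, Function.uncurry, F]
  have inner_t : ∀ t ∈ Ioc a x, h t * ∫ σ in a..t, g σ = ∫ σ, F t σ ∂μ := fun t ht => by
    have hset : Ioc a t = Ioc a x ∩ Iic t := by rw [Ioc_inter_Iic, min_eq_right ht.2]
    rw [intervalIntegral.integral_of_le ht.1.le, ← integral_const_mul, hμ, hset,
      ← setIntegral_indicator measurableSet_Iic]
    rfl
  have inner_σ : ∀ σ ∈ Ioc a x, ∫ t, F t σ ∂μ = (∫ t in σ..x, h t) * g σ := fun σ hσ => by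
    rw [intervalIntegral.integral_of_le hσ.2, ← integral_mul_const, hμ,
      ← integral_Icc_eq_integral_Ioc (x := σ)]
    have hIcc : Icc σ x = Ioc a x ∩ Ici σ := by
      ext t; simp only [mem_Icc, mem_inter_iff, mem_Ioc, mem_Ici]
      constructor
      · rintro ⟨h1, h2⟩; exact ⟨⟨hσ.1.trans_le h1, h2⟩, h1⟩
      · rintro ⟨⟨-, h2⟩, h1⟩; exact ⟨h1, h2⟩
    rw [hIcc, ← setIntegral_indicator measurableSet_Ici]
    rfl
  rw [intervalIntegral.integral_of_le hax, intervalIntegral.integral_of_le hax,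
    setIntegral_congr_fun measurableSet_Ioc inner_t, integral_integral_swap hF]
  exact setIntegral_congr_fun measurableSet_Ioc inner_σ

theorem norm_le_two_mul_exp_of_forall_le {K : Set ℝ} (hK : IsCompact K) {u : ℝ → ℂ}
    (hu : ContinuousOn u K) {β q τ : ℝ} (hq : q ≤ 1 / 2)
    (h : ∀ M, (∀ t ∈ K, ‖u t‖ ≤ M * Real.exp (τ * t)) →
      ∀ x ∈ K, ‖u x‖ ≤ (β + q * M) * Real.exp (τ * x)) :
    ∀ x ∈ K, ‖u x‖ ≤ 2 * β * Real.exp (τ * x) := by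
  intro x hx
  obtain ⟨z, hz, hmax⟩ := hK.exists_isMaxOn (f := fun t => ‖u t‖ * Real.exp (-(τ * t))) ⟨x, hx⟩
    (hu.norm.mul (Continuous.continuousOn (by fun_prop)))
  set M := ‖u z‖ * Real.exp (-(τ * z))
  have hbound : ∀ t ∈ K, ‖u t‖ ≤ M * Real.exp (τ * t) := fun t ht => by
    have := mul_le_mul_of_nonneg_right (hmax ht) (Real.exp_pos (τ * t)).le
    rwa [mul_assoc, ← Real.exp_add, neg_add_cancel, Real.exp_zero, mul_one] at this
  have hM : M ≤ β + q * M := by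
    have := mul_le_mul_of_nonneg_right (h M hbound z hz) (Real.exp_pos (-(τ * z))).le
    rwa [mul_assoc, ← Real.exp_add, add_neg_cancel, Real.exp_zero, mul_one] at this
  have hM0 : 0 ≤ M := by positivity
  calc ‖u x‖ ≤ M * Real.exp (τ * x) := hbound x hx
    _ ≤ 2 * β * Real.exp (τ * x) := by gcongr; nlinarith

theorem norm_integral_kernel_mul_le {k f : ℝ → ℂ} {V : ℝ → ℝ} {τ M x : ℝ} (hx : 0 ≤ x)
    (hV : IntervalIntegrable V volume 0 x)
    (hk : ∀ y ∈ Icc 0 x, ‖k y‖ ≤ Real.exp (τ * y))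
    (hf : ∀ t ∈ Icc 0 x, ‖f t‖ ≤ M * Real.exp (τ * t)) :
    ‖∫ t in (0:ℝ)..x, k (x - t) * (V t * f t)‖ ≤ M * Real.exp (τ * x) * ∫ t in (0:ℝ)..x, |V t| := by
  rw [← intervalIntegral.integral_const_mul]
  refine intervalIntegral.norm_integral_le_of_norm_le hx (ae_of_all _ fun t ht => ?_)
    (hV.abs.const_mul _)
  have ht' : t ∈ Icc 0 x := Ioc_subset_Icc_self ht
  calc ‖k (x - t) * (V t * f t)‖ = ‖k (x - t)‖ * (|V t| * ‖f t‖) := by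
        rw [norm_mul, norm_mul, Complex.norm_real, Real.norm_eq_abs]
    _ ≤ Real.exp (τ * (x - t)) * (|V t| * (M * Real.exp (τ * t))) := by
        gcongr
        · exact hk _ ⟨sub_nonneg.2 ht'.2, by linarith [ht'.1]⟩
        · exact hf t ht'
    _ = M * Real.exp (τ * x) * |V t| := by
        rw [show τ * x = τ * (x - t) + τ * t by ring, Real.exp_add]; ring

theorem hasDerivAt_cos_mul_ofReal (ρ : ℂ) (y : ℝ) :
    HasDerivAt (fun y : ℝ => Complex.cos (ρ * y)) (-Complex.sin (ρ * y) * ρ) y := by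
  simpa using ((hasDerivAt_id (y : ℂ)).const_mul ρ).ccos.comp_ofReal

theorem hasDerivAt_sin_mul_ofReal (ρ : ℂ) (y : ℝ) :
    HasDerivAt (fun y : ℝ => Complex.sin (ρ * y)) (Complex.cos (ρ * y) * ρ) y := by
  simpa using ((hasDerivAt_id (y : ℂ)).const_mul ρ).csin.comp_ofReal

/-- `u` solves `-u'' + V u = ρ² u` in integral form, with derivative `u'`. -/
def IsComplexSolution (V : ℝ → ℝ) (ρ : ℂ) (u u' : ℝ → ℂ) : Prop :=
  (∀ x, HasDerivAt u (u' x) x) ∧ ∀ x, u' x = u' 0 + ∫ t in (0:ℝ)..x, ((V t : ℂ) - ρ ^ 2) * u t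

/-- The solution of the free equation `-u'' = ρ² u` with `u(0) = a`, `u'(0) = b`. -/
def freeSolution (ρ a b : ℂ) (x : ℝ) : ℂ := a * Complex.cos (ρ * x) + b * Complex.sin (ρ * x) / ρ

theorem norm_freeSolution_le (ρ a b : ℂ) {x : ℝ} (hx : 0 ≤ x) :
    ‖freeSolution ρ a b x‖ ≤ (‖a‖ + ‖b‖ / ‖ρ‖) * Real.exp (|ρ.im| * x) := by
  unfold freeSolution
  calc ‖a * Complex.cos (ρ * x) + b * Complex.sin (ρ * x) / ρ‖
        ≤ ‖a‖ * ‖Complex.cos (ρ * x)‖ + ‖b‖ * ‖Complex.sin (ρ * x)‖ / ‖ρ‖ := by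
        simpa only [norm_mul, norm_div] using
          norm_add_le (a * Complex.cos (ρ * x)) (b * Complex.sin (ρ * x) / ρ)
    _ ≤ ‖a‖ * Real.exp (|ρ.im| * x) + ‖b‖ * Real.exp (|ρ.im| * x) / ‖ρ‖ := by
        gcongr
        · exact ρ.norm_cos_mul_ofReal_le hx
        · exact ρ.norm_sin_mul_ofReal_le hx
    _ = _ := by ring

namespace IsComplexSolution

variable {V : ℝ → ℝ} {ρ : ℂ} {u u' : ℝ → ℂ}

theorem continuous (hu : IsComplexSolution V ρ u u') : Continuous u :=
  continuous_iff_continuousAt.2 fun x => (hu.1 x).continuousAt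

theorem intervalIntegrable_rhs (hu : IsComplexSolution V ρ u u')
    (hV : ∀ a b, IntervalIntegrable V volume a b) (a b : ℝ) :
    IntervalIntegrable (fun t => ((V t : ℂ) - ρ ^ 2) * u t) volume a b := by
  simp_rw [sub_mul]
  exact ((hV a b).ofReal_mul hu.continuous).sub ((hu.continuous.const_mul _).intervalIntegrable _ _)

theorem continuous_deriv (hu : IsComplexSolution V ρ u u')
    (hV : ∀ a b, IntervalIntegrable V volume a b) : Continuous u' := by
  rw [funext hu.2]
  exact continuous_const.add
    (intervalIntegral.continuous_primitive (hu.intervalIntegrable_rhs hV) 0)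

/-- Both sides compute `∫₀ˣ φ(x - t) u'(t) dt`: the left by parts, the right by inserting
`u' = u'(0) + ∫ (V - ρ²) u` and exchanging the order of integration. -/
theorem convolution_identity (hu : IsComplexSolution V ρ u u')
    (hV : ∀ a b, IntervalIntegrable V volume a b) {φ φ' Φ : ℝ → ℂ}
    (hφ : ∀ y, HasDerivAt φ (φ' y) y) (hφ' : Continuous φ') (hΦ : ∀ y, HasDerivAt Φ (φ y) y)
    (hΦ0 : Φ 0 = 0) {x : ℝ} (hx : 0 ≤ x) :
    φ 0 * u x - φ x * u 0 + ∫ t in (0:ℝ)..x, φ' (x - t) * u t =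
      u' 0 * Φ x + ∫ t in (0:ℝ)..x, Φ (x - t) * (((V t : ℂ) - ρ ^ 2) * u t) := by
  have hφc : Continuous φ := continuous_iff_continuousAt.2 fun y => (hφ y).continuousAt
  have hprim : ∀ σ, ∫ t in σ..x, φ (x - t) = Φ (x - σ) := fun σ => by
    rw [intervalIntegral.integral_comp_sub_left, sub_self,
      intervalIntegral.integral_eq_sub_of_hasDerivAt (fun y _ => hΦ y) (hφc.intervalIntegrable _ _),
      hΦ0, sub_zero]
  have by_parts : ∫ t in (0:ℝ)..x, φ (x - t) * u' t =
      φ 0 * u x - φ x * u 0 + ∫ t in (0:ℝ)..x, φ' (x - t) * u t := by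
    rw [intervalIntegral.integral_mul_deriv_eq_deriv_mul
      (fun t _ => (hφ (x - t)).comp_const_sub x t)
      (fun t _ => hu.1 t) ((hφ'.comp (continuous_sub_left x)).neg.intervalIntegrable _ _)
      ((hu.continuous_deriv hV).intervalIntegrable _ _)]
    simp only [sub_self, sub_zero, neg_mul, intervalIntegral.integral_neg]
    ring
  have by_fubini : ∫ t in (0:ℝ)..x, φ (x - t) * u' t =
      u' 0 * Φ x + ∫ t in (0:ℝ)..x, Φ (x - t) * (((V t : ℂ) - ρ ^ 2) * u t) := by
    have hφx : Continuous fun t => φ (x - t) := hφc.comp (continuous_sub_left x)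
    rw [intervalIntegral.integral_congr fun t _ => by rw [hu.2 t, mul_add],
      intervalIntegral.integral_add ((hφx.fun_mul continuous_const).intervalIntegrable _ _)
        ((hφx.fun_mul (intervalIntegral.continuous_primitive (hu.intervalIntegrable_rhs hV) 0))
          |>.intervalIntegrable _ _),
      intervalIntegral.integral_mul_const, hprim, sub_zero, mul_comm,
      integral_mul_integral_eq_integral_integral_mul hx (hu.intervalIntegrable_rhs hV 0 x)
        (hφx.intervalIntegrable _ _)]
    simp_rw [hprim]
  rw [← by_parts, by_fubini]

theorem eq_freeSolution_add_integral (hu : IsComplexSolution V ρ u u')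
    (hV : ∀ a b, IntervalIntegrable V volume a b) (hρ : ρ ≠ 0) {x : ℝ} (hx : 0 ≤ x) :
    u x = freeSolution ρ (u 0) (u' 0) x +
      (∫ t in (0:ℝ)..x, Complex.sin (ρ * (x - t : ℝ)) * (V t * u t)) / ρ := by
  have key := hu.convolution_identity hV (φ := fun y => Complex.cos (ρ * y))
    (Φ := fun y => Complex.sin (ρ * y) / ρ) (hasDerivAt_cos_mul_ofReal ρ) (by fun_prop)
    (fun y => by simpa [hρ] using (hasDerivAt_sin_mul_ofReal ρ y).div_const ρ) (by simp) hx
  have hsplit : ∀ t, Complex.sin (ρ * (x - t : ℝ)) / ρ * (((V t : ℂ) - ρ ^ 2) * u t) =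
      Complex.sin (ρ * (x - t : ℝ)) * (V t * u t) / ρ + -Complex.sin (ρ * (x - t : ℝ)) * ρ * u t :=
    fun t => by field_simp; ring
  simp only [hsplit] at key
  rw [intervalIntegral.integral_add
    (((hV 0 x).mul_ofReal_mul (by fun_prop) hu.continuous).div_const ρ)
    (Continuous.intervalIntegrable (by have := hu.continuous; fun_prop) 0 x),
    intervalIntegral.integral_div] at key
  simp only [Complex.ofReal_zero, mul_zero, Complex.cos_zero] at key
  unfold freeSolution
  linear_combination key

theorem deriv_eq_integral (hu : IsComplexSolution V ρ u u')
    (hV : ∀ a b, IntervalIntegrable V volume a b) (hρ : ρ ≠ 0) {x : ℝ} (hx : 0 ≤ x) :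
    u' x = -(ρ * u 0 * Complex.sin (ρ * x)) + u' 0 * Complex.cos (ρ * x) +
      ∫ t in (0:ℝ)..x, Complex.cos (ρ * (x - t : ℝ)) * (V t * u t) := by
  have key := hu.convolution_identity hV (φ := fun y => Complex.sin (ρ * y) / ρ)
    (Φ := fun y => (1 - Complex.cos (ρ * y)) / ρ ^ 2)
    (fun y => by simpa [hρ] using (hasDerivAt_sin_mul_ofReal ρ y).div_const ρ) (by fun_prop)
    (fun y => ((hasDerivAt_cos_mul_ofReal ρ y).const_sub 1).div_const (ρ ^ 2)
      |>.congr_deriv (by field_simp))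
    (by simp) hx
  have hsplit : ∀ t, (1 - Complex.cos (ρ * (x - t : ℝ))) / ρ ^ 2 * (((V t : ℂ) - ρ ^ 2) * u t) =
      ((((V t : ℂ) - ρ ^ 2) * u t) - Complex.cos (ρ * (x - t : ℝ)) * (V t * u t)) / ρ ^ 2 +
        Complex.cos (ρ * (x - t : ℝ)) * u t :=
    fun t => by field_simp; ring
  simp only [hsplit] at key
  rw [intervalIntegral.integral_add
    (((hu.intervalIntegrable_rhs hV 0 x).sub
      ((hV 0 x).mul_ofReal_mul (by fun_prop) hu.continuous)).div_const _)
    (Continuous.intervalIntegrable (by have := hu.continuous; fun_prop) 0 x),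
    intervalIntegral.integral_div, intervalIntegral.integral_sub (hu.intervalIntegrable_rhs hV 0 x)
      ((hV 0 x).mul_ofReal_mul (by fun_prop) hu.continuous), ← sub_eq_iff_eq_add'.2 (hu.2 x)] at key
  simp only [Complex.ofReal_zero, mul_zero, Complex.sin_zero, zero_div, zero_mul] at key
  generalize (∫ t in (0:ℝ)..x, Complex.cos (ρ * (x - t : ℝ)) * (V t * u t)) = K at key ⊢
  field_simp at key
  linear_combination -key

theorem norm_sub_freeSolution_le_of_forall_norm_le (hu : IsComplexSolution V ρ u u')
    (hV : ∀ a b, IntervalIntegrable V volume a b) (hρ : ρ ≠ 0) {M : ℝ}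
    (hM : ∀ t ∈ Icc (0:ℝ) 1, ‖u t‖ ≤ M * Real.exp (|ρ.im| * t)) {x : ℝ} (hx : x ∈ Icc (0:ℝ) 1) :
    ‖u x - freeSolution ρ (u 0) (u' 0) x‖ ≤
      M * (∫ t in (0:ℝ)..1, |V t|) / ‖ρ‖ * Real.exp (|ρ.im| * x) := by
  have hM0 : 0 ≤ M := by simpa using (norm_nonneg _).trans (hM 0 ⟨le_rfl, zero_le_one⟩)
  have hVx : ∫ t in (0:ℝ)..x, |V t| ≤ ∫ t in (0:ℝ)..1, |V t| :=
    intervalIntegral.integral_mono_interval le_rfl hx.1 hx.2 (ae_of_all _ fun t => abs_nonneg _)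
      (hV 0 1).abs
  rw [hu.eq_freeSolution_add_integral hV hρ hx.1, add_sub_cancel_left, norm_div]
  calc _ ≤ M * Real.exp (|ρ.im| * x) * (∫ t in (0:ℝ)..x, |V t|) / ‖ρ‖ := by
        gcongr
        exact norm_integral_kernel_mul_le (k := fun y => Complex.sin (ρ * y)) hx.1 (hV 0 x)
          (fun y hy => ρ.norm_sin_mul_ofReal_le hy.1) (fun t ht => hM t ⟨ht.1, ht.2.trans hx.2⟩)
    _ ≤ M * Real.exp (|ρ.im| * x) * (∫ t in (0:ℝ)..1, |V t|) / ‖ρ‖ := by gcongr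
    _ = _ := by ring

theorem norm_le (hu : IsComplexSolution V ρ u u') (hV : ∀ a b, IntervalIntegrable V volume a b)
    (hρ : ρ ≠ 0) (hVρ : 2 * ∫ t in (0:ℝ)..1, |V t| ≤ ‖ρ‖) {x : ℝ} (hx : x ∈ Icc (0:ℝ) 1) :
    ‖u x‖ ≤ 2 * (‖u 0‖ + ‖u' 0‖ / ‖ρ‖) * Real.exp (|ρ.im| * x) := by
  refine norm_le_two_mul_exp_of_forall_le isCompact_Icc hu.continuous.continuousOn
    (q := (∫ t in (0:ℝ)..1, |V t|) / ‖ρ‖) ?_ (fun M hM y hy => ?_) x hx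
  · rw [div_le_iff₀ (norm_pos_iff.2 hρ)]; linarith
  calc ‖u y‖ ≤ ‖freeSolution ρ (u 0) (u' 0) y‖ + ‖u y - freeSolution ρ (u 0) (u' 0) y‖ :=
        norm_le_insert' _ _
    _ ≤ (‖u 0‖ + ‖u' 0‖ / ‖ρ‖) * Real.exp (|ρ.im| * y) +
          M * (∫ t in (0:ℝ)..1, |V t|) / ‖ρ‖ * Real.exp (|ρ.im| * y) :=
        add_le_add (norm_freeSolution_le _ _ _ hy.1)
          (hu.norm_sub_freeSolution_le_of_forall_norm_le hV hρ hM hy)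
    _ = _ := by ring

theorem norm_sub_freeSolution_le (hu : IsComplexSolution V ρ u u')
    (hV : ∀ a b, IntervalIntegrable V volume a b) (hρ : ρ ≠ 0)
    (hVρ : 2 * ∫ t in (0:ℝ)..1, |V t| ≤ ‖ρ‖) {x : ℝ} (hx : x ∈ Icc (0:ℝ) 1) :
    ‖u x - freeSolution ρ (u 0) (u' 0) x‖ ≤
      2 * (‖u 0‖ + ‖u' 0‖ / ‖ρ‖) * (∫ t in (0:ℝ)..1, |V t|) / ‖ρ‖ * Real.exp (|ρ.im| * x) :=
  hu.norm_sub_freeSolution_le_of_forall_norm_le hV hρ (fun _ ht => hu.norm_le hV hρ hVρ ht) hx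

end IsComplexSolution

theorem discriminant_sub_eq_integral {V : ℝ → ℝ} {ρ : ℂ} {c c' s s' : ℝ → ℂ}
    (hc : IsComplexSolution V ρ c c') (hs : IsComplexSolution V ρ s s')
    (hV : ∀ a b, IntervalIntegrable V volume a b) (hρ : ρ ≠ 0)
    (hc0 : c 0 = 1) (hc'0 : c' 0 = 0) (hs0 : s 0 = 0) (hs'0 : s' 0 = 1) :
    c 1 + s' 1 - 2 * Complex.cos ρ - Complex.sin ρ / ρ * ((∫ t in (0:ℝ)..1, V t : ℝ) : ℂ) =
      (∫ t in (0:ℝ)..1, Complex.sin (ρ * (1 - t : ℝ)) * (V t * (c t - freeSolution ρ 1 0 t))) / ρ +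
        ∫ t in (0:ℝ)..1, Complex.cos (ρ * (1 - t : ℝ)) * (V t * (s t - freeSolution ρ 0 1 t)) := by
  have hc_split : ∫ t in (0:ℝ)..1, Complex.sin (ρ * (1 - t : ℝ)) * (V t * c t) =
      (∫ t in (0:ℝ)..1, Complex.sin (ρ * (1 - t : ℝ)) * (V t * (c t - freeSolution ρ 1 0 t))) +
        ∫ t in (0:ℝ)..1, (V t : ℂ) * (Complex.sin (ρ * (1 - t : ℝ)) * Complex.cos (ρ * t)) := by
    rw [← intervalIntegral.integral_add]
    · congr 1 with t; simp only [freeSolution]; ring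
    · exact (hV 0 1).mul_ofReal_mul (by fun_prop)
        (hc.continuous.sub (by unfold freeSolution; fun_prop))
    · exact (hV 0 1).ofReal_mul (by fun_prop)
  have hs_split : ∫ t in (0:ℝ)..1, Complex.cos (ρ * (1 - t : ℝ)) * (V t * s t) =
      (∫ t in (0:ℝ)..1, Complex.cos (ρ * (1 - t : ℝ)) * (V t * (s t - freeSolution ρ 0 1 t))) +
        (∫ t in (0:ℝ)..1,
          (V t : ℂ) * (Complex.cos (ρ * (1 - t : ℝ)) * Complex.sin (ρ * t))) / ρ := by
    rw [← intervalIntegral.integral_div, ← intervalIntegral.integral_add]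
    · congr 1 with t; simp only [freeSolution]; ring
    · exact (hV 0 1).mul_ofReal_mul (by fun_prop)
        (hs.continuous.sub (by unfold freeSolution; fun_prop))
    · exact ((hV 0 1).ofReal_mul (by fun_prop)).div_const ρ
  have h_sin_add :
      (∫ t in (0:ℝ)..1, (V t : ℂ) * (Complex.sin (ρ * (1 - t : ℝ)) * Complex.cos (ρ * t))) +
        ∫ t in (0:ℝ)..1, (V t : ℂ) * (Complex.cos (ρ * (1 - t : ℝ)) * Complex.sin (ρ * t)) =
          Complex.sin ρ * ((∫ t in (0:ℝ)..1, V t : ℝ) : ℂ) := by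
    rw [← intervalIntegral.integral_add ((hV 0 1).ofReal_mul (by fun_prop))
      ((hV 0 1).ofReal_mul (by fun_prop)), ← intervalIntegral.integral_ofReal,
      ← intervalIntegral.integral_const_mul]
    congr 1 with t
    rw [← mul_add, ← Complex.sin_add, ← mul_add, ← Complex.ofReal_add, sub_add_cancel,
      Complex.ofReal_one, mul_one, mul_comm]
  rw [hc.eq_freeSolution_add_integral hV hρ zero_le_one, hs.deriv_eq_integral hV hρ zero_le_one,
    hc_split, hs_split, hc0, hc'0, hs0, hs'0,
    show freeSolution ρ 1 0 1 = Complex.cos ρ by simp [freeSolution]]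
  simp only [Complex.ofReal_one, mul_one]
  linear_combination h_sin_add / ρ

theorem discriminant_expansion_general
    (V0 : ℝ → ℝ) (hV0meas : Measurable V0)
    (hV0L2 : ∀ a b : ℝ, IntervalIntegrable (fun x => V0 x ^ 2) volume a b)
    (A : ℝ) (hA : A = ∫ x in (0:ℝ)..1, |V0 x|)
    (ρ : ℂ) (hρ : max 1 (2 * A) < ‖ρ‖)
    (c c' s s' : ℝ → ℂ)
    (hcderiv : ∀ x, HasDerivAt c (c' x) x)
    (hcint : ∀ x, c' x = c' 0 + ∫ t in (0:ℝ)..x, ((V0 t : ℂ) - ρ ^ 2) * c t)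
    (hc0 : c 0 = 1) (hc'0 : c' 0 = 0)
    (hsderiv : ∀ x, HasDerivAt s (s' x) x)
    (hsint : ∀ x, s' x = s' 0 + ∫ t in (0:ℝ)..x, ((V0 t : ℂ) - ρ ^ 2) * s t)
    (hs0 : s 0 = 0) (hs'0 : s' 0 = 1) :
    ‖c 1 + s' 1 - 2 * Complex.cos ρ -
        Complex.sin ρ / ρ * ((∫ t in (0:ℝ)..1, V0 t : ℝ) : ℂ)‖ ≤
      4 * A ^ 2 * Real.exp |ρ.im| / ‖ρ‖ ^ 2 := by
  have hV (a b : ℝ) : IntervalIntegrable V0 volume a b :=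
    (hV0L2 a b).of_sq hV0meas.aestronglyMeasurable
  have hρ0 : ρ ≠ 0 := norm_pos_iff.1 (zero_lt_one.trans ((le_max_left _ _).trans_lt hρ))
  have hVρ : 2 * ∫ t in (0:ℝ)..1, |V0 t| ≤ ‖ρ‖ := hA ▸ ((le_max_right _ _).trans_lt hρ).le
  have hc : IsComplexSolution V0 ρ c c' := ⟨hcderiv, hcint⟩
  have hs : IsComplexSolution V0 ρ s s' := ⟨hsderiv, hsint⟩
  have hc_pert (t : ℝ) (ht : t ∈ Icc (0:ℝ) 1) :
      ‖c t - freeSolution ρ 1 0 t‖ ≤ 2 * A / ‖ρ‖ * Real.exp (|ρ.im| * t) := by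
    have := hc.norm_sub_freeSolution_le hV hρ0 hVρ ht
    rw [hc0, hc'0, ← hA] at this
    exact this.trans_eq (by simp)
  have hs_pert (t : ℝ) (ht : t ∈ Icc (0:ℝ) 1) :
      ‖s t - freeSolution ρ 0 1 t‖ ≤ 2 * A / ‖ρ‖ ^ 2 * Real.exp (|ρ.im| * t) := by
    have := hs.norm_sub_freeSolution_le hV hρ0 hVρ ht
    rw [hs0, hs'0, ← hA] at this
    exact this.trans_eq (by simp; ring)
  rw [discriminant_sub_eq_integral hc hs hV hρ0 hc0 hc'0 hs0 hs'0]
  calc _ ≤ _ := norm_add_le _ _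
    _ ≤ 2 * A / ‖ρ‖ * Real.exp (|ρ.im| * 1) * A / ‖ρ‖ +
          2 * A / ‖ρ‖ ^ 2 * Real.exp (|ρ.im| * 1) * A := by
        rw [norm_div]
        gcongr
        · exact (norm_integral_kernel_mul_le zero_le_one (hV 0 1)
            (fun y hy => ρ.norm_sin_mul_ofReal_le hy.1) hc_pert).trans_eq (by rw [hA])
        · exact (norm_integral_kernel_mul_le zero_le_one (hV 0 1)
            (fun y hy => ρ.norm_cos_mul_ofReal_le hy.1) hs_pert).trans_eq (by rw [hA])
    _ = 4 * A ^ 2 * Real.exp |ρ.im| / ‖ρ‖ ^ 2 := by rw [mul_one]; ring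

/-- The discriminant expansion `D(E) = 2cos ρ + (sin ρ/ρ)∫₀¹V0 + f(ρ)` with
`|f(ρ)| ≤ 4A²e^{|τ|}/|ρ|²`, for `E = ρ²`, `|ρ| > max{1, 2A}`. -/
theorem discriminant_expansion
    (V0 : ℝ → ℝ) (hV0per : Function.Periodic V0 1) (hV0meas : Measurable V0)
    (hV0L2 : ∀ a b : ℝ, IntervalIntegrable (fun x => V0 x ^ 2) volume a b)
    (A : ℝ) (hA : A = ∫ x in (0:ℝ)..1, |V0 x|)
    (ρ : ℂ) (hρ : max 1 (2 * A) < ‖ρ‖)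
    (c c' s s' : ℝ → ℂ)
    (hcderiv : ∀ x, HasDerivAt c (c' x) x)
    (hcint : ∀ x, c' x = c' 0 + ∫ t in (0:ℝ)..x, ((V0 t : ℂ) - ρ ^ 2) * c t)
    (hc0 : c 0 = 1) (hc'0 : c' 0 = 0)
    (hsderiv : ∀ x, HasDerivAt s (s' x) x)
    (hsint : ∀ x, s' x = s' 0 + ∫ t in (0:ℝ)..x, ((V0 t : ℂ) - ρ ^ 2) * s t)
    (hs0 : s 0 = 0) (hs'0 : s' 0 = 1) :
    ‖c 1 + s' 1 - 2 * Complex.cos ρ -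
        Complex.sin ρ / ρ * ((∫ t in (0:ℝ)..1, V0 t : ℝ) : ℂ)‖ ≤
      4 * A ^ 2 * Real.exp |ρ.im| / ‖ρ‖ ^ 2 :=
  discriminant_expansion_general V0 hV0meas hV0L2 A hA ρ hρ c c' s s' hcderiv hcint hc0 hc'0 hsderiv
    hsint hs0 hs'0
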